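/- arXiv:2604.22690 — 2 statements merged into one kernel-verified Lean document; each statement's English description precedes it below -/
import Mathlib

section
/- Let $b$ be a positive real number and let $w$ be a weight on $\mathbb{R}^n$. Then there exists a positive constant $C$ (depending only on $n$ and $b$) such that for every $x_0 \in \mathbb{R}^n$ and almost every $x \in \mathbb{R}^n \setminus \{x_0\}$ with $|x_0 - x| \le 1$, one has $\int_{\{y : |x_0-y| > 2|x_0-x|^{1/(1+b)}\}} |K_b(x-y) - K_b(x_0-y)|\, w(y)\,dy \le C\, Mw(x)$. -/
open MeasureTheory Metric Filter
open scoped ENNReal NNReal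

/-- The strongly singular kernel `K_b(x) = e^{i|x|^{-b}} |x|^{-n} χ_{{|x| ≤ 1}}(x)` on `ℝⁿ`. -/
noncomputable def stronglySingularKernel (n : ℕ) (b : ℝ) (x : EuclideanSpace ℝ (Fin n)) : ℂ :=
  if 0 < ‖x‖ ∧ ‖x‖ ≤ 1 then
    Complex.exp (Complex.I * ((‖x‖ ^ (-b) : ℝ) : ℂ)) / ((‖x‖ : ℂ) ^ (n : ℕ))
  else 0

/-- The strongly singular integral operator `T_b f(x) = p.v. ∫ K_b(x-y) f(y) dy`,
defined as the limit of the truncated integrals as the truncation parameter `ε → 0⁺`. -/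
noncomputable def stronglySingularOp (n : ℕ) (b : ℝ) (f : EuclideanSpace ℝ (Fin n) → ℂ)
    (x : EuclideanSpace ℝ (Fin n)) : ℂ :=
  limUnder (nhdsWithin (0 : ℝ) (Set.Ioi 0))
    fun ε => ∫ y in {y : EuclideanSpace ℝ (Fin n) | ε < dist x y},
      stronglySingularKernel n b (x - y) * f y

/-- The Hardy–Littlewood maximal function of a weight `w`, valued in `ℝ≥0∞`. -/
noncomputable def maximalFn (n : ℕ) (w : EuclideanSpace ℝ (Fin n) → ℝ)
    (x : EuclideanSpace ℝ (Fin n)) : ℝ≥0∞ :=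
  ⨆ (c : EuclideanSpace ℝ (Fin n)) (r : ℝ) (_ : 0 < r) (_ : x ∈ ball c r),
    (∫⁻ y in ball c r, ENNReal.ofReal (w y)) / volume (ball c r)

/-- A weight `w` on `ℝⁿ` is a Muckenhoupt `A₁` weight: it is nonnegative, locally integrable,
and there is `C > 0` with `(1/|B|) ∫_B w ≤ C essinf_B w` for every ball `B`. -/
def IsA1 (n : ℕ) (w : EuclideanSpace ℝ (Fin n) → ℝ) : Prop :=
  LocallyIntegrable w volume ∧ (∀ x, 0 ≤ w x) ∧
    ∃ C : ℝ, 0 < C ∧ ∀ (c : EuclideanSpace ℝ (Fin n)) (r : ℝ), 0 < r →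
      (∫⁻ y in ball c r, ENNReal.ofReal (w y)) ≤
        ENNReal.ofReal C * volume (ball c r) *
          essInf (fun y => ENNReal.ofReal (w y)) (volume.restrict (ball c r))

/-- A weight `w` on `ℝⁿ` is a Muckenhoupt `A_p` weight for `1 < p < ∞`. -/
def IsAp (n : ℕ) (p : ℝ) (w : EuclideanSpace ℝ (Fin n) → ℝ) : Prop :=
  LocallyIntegrable w volume ∧ (∀ x, 0 ≤ w x) ∧
    ∃ C : ℝ, 0 < C ∧ ∀ (c : EuclideanSpace ℝ (Fin n)) (r : ℝ), 0 < r →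
      ((∫⁻ y in ball c r, ENNReal.ofReal (w y)) / volume (ball c r)) *
        ((∫⁻ y in ball c r, ENNReal.ofReal (w y) ^ (-1 / (p - 1))) /
          volume (ball c r)) ^ (p - 1) ≤ ENNReal.ofReal C

/-!
Write `d = |x₀ - x|` and `r = |x₀ - y|`. When `r > 2d`, the norms of `x - y` and `x₀ - y` both lie
in `(r/2, 3r/2)`. If both points lie in the unit ball, the mean value theorem for the phase `t^{-b}`
and for the amplitude `t^{-n}` bounds the kernel difference by a constant times `d r^{-(n+b+1)}`.
Otherwise the difference is at most `2^{n+1}`, and it vanishes unless `r ≤ 2`. On the dyadic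
annuli `A 2^k ≤ r < A 2^{k+1}`, the integral of `w` is at most `Mw(x)` times the volume of a ball
around `x₀` that contains `x`. Summing over the annuli bounds the smooth part by
`d A^{-(b+1)} Mw(x)`, up to a constant, and this is `O(Mw(x))` exactly when `A ≳ d^{1/(1+b)}`. The
remaining part is at most `2^{n+1}` times the integral of `w` over `B(x₀, 3)`.
-/

open Complex in
theorem norm_cexp_I_mul_sub_cexp_I_mul_le (s t : ℝ) :
    ‖exp (I * s) - exp (I * t)‖ ≤ |s - t| := by
  have h : exp (I * s) - exp (I * t) = exp (I * t) * (exp (I * ↑(s - t)) - 1) := by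
    rw [mul_sub, ← exp_add]; push_cast; ring_nf
  rw [h, norm_mul, norm_exp_I_mul_ofReal, one_mul, ← Real.norm_eq_abs]
  exact Real.norm_exp_I_mul_ofReal_sub_one_le

theorem abs_rpow_sub_rpow_le {p m s t : ℝ} (hp : p ≤ 1) (hm : 0 < m) (hs : m ≤ s) (ht : m ≤ t) :
    |s ^ p - t ^ p| ≤ |p| * m ^ (p - 1) * |s - t| := by
  have hderiv : ∀ u ∈ Set.Ici m,
      HasDerivWithinAt (fun u => u ^ p) (p * u ^ (p - 1)) (Set.Ici m) u := fun u hu =>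
    (Real.hasDerivAt_rpow_const (Or.inl (hm.trans_le hu).ne')).hasDerivWithinAt
  have hbound : ∀ u ∈ Set.Ici m, ‖p * u ^ (p - 1)‖ ≤ |p| * m ^ (p - 1) := fun u hu => by
    rw [norm_mul, Real.norm_eq_abs, Real.norm_of_nonneg (Real.rpow_nonneg (hm.le.trans hu) _)]
    exact mul_le_mul_of_nonneg_left
      (Real.rpow_le_rpow_of_nonpos hm hu (by linarith)) (abs_nonneg p)
  simpa only [Real.norm_eq_abs] using
    (convex_Ici m).norm_image_sub_le_of_norm_hasDerivWithin_le hderiv hbound ht hs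

open Complex in
theorem norm_cexp_I_mul_rpow_mul_rpow_sub_le {b p m s t : ℝ} (hb : 0 ≤ b) (hp : 0 ≤ p)
    (hm : 0 < m) (hm1 : m ≤ 1) (hs : m ≤ s) (ht : m ≤ t) :
    ‖exp (I * ↑(s ^ (-b))) * ↑(s ^ (-p)) - exp (I * ↑(t ^ (-b))) * ↑(t ^ (-p))‖ ≤
      (b + p) * m ^ (-(p + (b + 1))) * |s - t| := by
  have hs0 : 0 < s := hm.trans_le hs
  have hsplit : exp (I * ↑(s ^ (-b))) * ↑(s ^ (-p)) - exp (I * ↑(t ^ (-b))) * ↑(t ^ (-p)) =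
      (exp (I * ↑(s ^ (-b))) - exp (I * ↑(t ^ (-b)))) * ↑(s ^ (-p)) +
        exp (I * ↑(t ^ (-b))) * ↑(s ^ (-p) - t ^ (-p)) := by
    push_cast; ring
  have hphase : ‖exp (I * ↑(s ^ (-b))) - exp (I * ↑(t ^ (-b)))‖ ≤ b * m ^ (-b - 1) * |s - t| :=
    (norm_cexp_I_mul_sub_cexp_I_mul_le _ _).trans <| by
      simpa only [abs_neg, abs_of_nonneg hb] using
        abs_rpow_sub_rpow_le (p := -b) (by linarith) hm hs ht
  have hamp : |s ^ (-p) - t ^ (-p)| ≤ p * m ^ (-(p + (b + 1))) * |s - t| := by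
    refine (abs_rpow_sub_rpow_le (p := -p) (by linarith) hm hs ht).trans ?_
    rw [abs_neg, abs_of_nonneg hp]
    exact mul_le_mul_of_nonneg_right (mul_le_mul_of_nonneg_left
      (Real.rpow_le_rpow_of_exponent_ge hm hm1 (by linarith)) hp) (abs_nonneg _)
  have hexp : m ^ (-b - 1) * m ^ (-p) = m ^ (-(p + (b + 1))) := by
    rw [← Real.rpow_add hm]; ring_nf
  calc _ ≤ ‖exp (I * ↑(s ^ (-b))) - exp (I * ↑(t ^ (-b)))‖ * s ^ (-p) + |s ^ (-p) - t ^ (-p)| := by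
        rw [hsplit]
        refine (norm_add_le _ _).trans_eq ?_
        rw [norm_mul, norm_mul, norm_exp_I_mul_ofReal, one_mul, Complex.norm_real,
          Complex.norm_real, Real.norm_of_nonneg (Real.rpow_nonneg hs0.le _), Real.norm_eq_abs]
    _ ≤ b * m ^ (-b - 1) * |s - t| * m ^ (-p) + p * m ^ (-(p + (b + 1))) * |s - t| := by
        refine add_le_add (mul_le_mul hphase ?_ (by positivity) (by positivity)) hamp
        exact Real.rpow_le_rpow_of_nonpos hm hs (by linarith)
    _ = (b + p) * m ^ (-(p + (b + 1))) * |s - t| := by rw [← hexp]; ring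

theorem rpow_neg_mul_pow_dyadic {A ε : ℝ} (hA : 0 < A) (n k : ℕ) :
    (A * 2 ^ k) ^ (-(n + ε)) * (A * 2 ^ (k + 1)) ^ n =
      2 ^ n * A ^ (-ε) * ((2 : ℝ) ^ (-ε)) ^ k := by
  have hAk : 0 < A * 2 ^ k := by positivity
  rw [Real.rpow_neg hAk.le, Real.rpow_add hAk, Real.rpow_natCast, pow_succ, ← mul_assoc,
    mul_pow, Real.mul_rpow hA.le (by positivity), ← Real.rpow_natCast (2 : ℝ) k,
    ← Real.rpow_mul zero_le_two, Real.rpow_neg hA.le, Real.rpow_neg zero_le_two,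
    ← Real.rpow_natCast (2 ^ ε)⁻¹ k, Real.inv_rpow (by positivity), ← Real.rpow_mul zero_le_two]
  field_simp
  ring_nf

section Kernel

variable {n : ℕ} {b : ℝ} {u v : EuclideanSpace ℝ (Fin n)}

theorem stronglySingularKernel_eq (h0 : 0 < ‖u‖) (h1 : ‖u‖ ≤ 1) :
    stronglySingularKernel n b u =
      Complex.exp (Complex.I * ↑(‖u‖ ^ (-b))) * ↑(‖u‖ ^ (-(n : ℝ))) := by
  rw [stronglySingularKernel, if_pos ⟨h0, h1⟩, Real.rpow_neg h0.le (n : ℝ), Real.rpow_natCast,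
    div_eq_mul_inv]
  push_cast
  rfl

theorem stronglySingularKernel_eq_zero (h : 1 < ‖u‖) : stronglySingularKernel n b u = 0 :=
  if_neg fun h' => h.not_ge h'.2

theorem norm_stronglySingularKernel_le (h : 1 / 2 ≤ ‖u‖) :
    ‖stronglySingularKernel n b u‖ ≤ 2 ^ n := by
  rw [stronglySingularKernel]
  split_ifs with h'
  · rw [norm_div, Complex.norm_exp_I_mul_ofReal, norm_pow, Complex.norm_real, norm_norm,
      one_div, ← inv_pow]
    exact pow_le_pow_left₀ (by positivity) ((inv_le_comm₀ h'.1 two_pos).2 (by linarith)) n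
  · rw [norm_zero]; positivity

theorem norm_stronglySingularKernel_sub_le_of_norm_le_one (hb : 0 ≤ b) {m : ℝ} (hm : 0 < m)
    (hm1 : m ≤ 1) (hu : m ≤ ‖u‖) (hu1 : ‖u‖ ≤ 1) (hv : m ≤ ‖v‖) (hv1 : ‖v‖ ≤ 1) :
    ‖stronglySingularKernel n b u - stronglySingularKernel n b v‖ ≤
      (b + n) * m ^ (-(n + (b + 1))) * |‖u‖ - ‖v‖| := by
  rw [stronglySingularKernel_eq (hm.trans_le hu) hu1,
    stronglySingularKernel_eq (hm.trans_le hv) hv1]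
  exact norm_cexp_I_mul_rpow_mul_rpow_sub_le hb n.cast_nonneg hm hm1 hu hv

end Kernel

theorem norm_stronglySingularKernel_sub_le {n : ℕ} {b : ℝ} (hb : 0 ≤ b)
    {x x₀ y : EuclideanSpace ℝ (Fin n)} (hy : 2 * dist x₀ x < dist x₀ y) :
    ‖stronglySingularKernel n b (x - y) - stronglySingularKernel n b (x₀ - y)‖ ≤
      (b + n) * 2 ^ ((n : ℝ) + (b + 1)) * dist x₀ x * dist x₀ y ^ (-(n + (b + 1))) +
        (closedBall x₀ 2).indicator (fun _ => (2 : ℝ) ^ (n + 1)) y := by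
  set d := dist x₀ x
  set r := dist x₀ y
  have hr : ‖x₀ - y‖ = r := (dist_eq_norm x₀ y).symm
  have hd : |‖x - y‖ - r| ≤ d := by
    rw [← hr, show d = ‖x - x₀‖ by rw [← dist_eq_norm, dist_comm]]
    simpa only [sub_sub_sub_cancel_right] using abs_norm_sub_norm_le (x - y) (x₀ - y)
  obtain ⟨hd₁, hd₂⟩ := abs_le.1 hd
  have hd0 : 0 ≤ d := dist_nonneg
  have hsmooth_nonneg :
      0 ≤ (b + n) * 2 ^ ((n : ℝ) + (b + 1)) * d * r ^ (-(n + (b + 1))) := by positivity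
  have hind_nonneg : 0 ≤ (closedBall x₀ 2).indicator (fun _ => (2 : ℝ) ^ (n + 1)) y :=
    Set.indicator_nonneg (fun _ _ => by positivity) y
  by_cases hnear : ‖x - y‖ ≤ 1 ∧ r ≤ 1
  · refine le_add_of_le_of_nonneg ?_ hind_nonneg
    have hm : 0 < r / 2 := by linarith
    calc _ ≤ (b + n) * (r / 2) ^ (-(n + (b + 1))) * |‖x - y‖ - ‖x₀ - y‖| :=
          norm_stronglySingularKernel_sub_le_of_norm_le_one hb hm (by linarith) (by linarith)
            hnear.1 (by linarith) (hr ▸ hnear.2)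
      _ ≤ (b + n) * (r / 2) ^ (-(n + (b + 1))) * d := by rw [hr]; gcongr
      _ = _ := by
        rw [Real.div_rpow (by linarith) zero_le_two, Real.rpow_neg zero_le_two]
        field_simp
  · refine le_add_of_nonneg_of_le hsmooth_nonneg ?_
    by_cases hr2 : r ≤ 2
    · rw [Set.indicator_of_mem (mem_closedBall'.2 hr2), pow_succ, mul_two]
      rw [not_and_or, not_le, not_le] at hnear
      refine (norm_sub_le _ _).trans (add_le_add ?_ ?_) <;>
        refine norm_stronglySingularKernel_le ?_ <;> rcases hnear with h | h <;> linarith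
    · rw [stronglySingularKernel_eq_zero (by linarith),
        stronglySingularKernel_eq_zero (by linarith), sub_zero, norm_zero]
      exact hind_nonneg

noncomputable def unitBallVolume (n : ℕ) : ℝ :=
  (volume (ball (0 : EuclideanSpace ℝ (Fin n)) 1)).toReal

theorem unitBallVolume_pos (n : ℕ) : 0 < unitBallVolume n :=
  ENNReal.toReal_pos (measure_ball_pos _ _ one_pos).ne' measure_ball_lt_top.ne

theorem volume_ball_eq_ofReal {n : ℕ} (x : EuclideanSpace ℝ (Fin n)) {R : ℝ} (hR : 0 < R) :
    volume (ball x R) = ENNReal.ofReal (R ^ n * unitBallVolume n) := by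
  rw [Measure.addHaar_ball_of_pos _ _ hR, finrank_euclideanSpace_fin,
    ENNReal.ofReal_mul (by positivity), unitBallVolume,
    ENNReal.ofReal_toReal measure_ball_lt_top.ne]

theorem setOf_lt_dist_subset_iUnion_annulus {X : Type*} [PseudoMetricSpace X] (x₀ : X) {A : ℝ}
    (hA : 0 < A) :
    {y | A < dist x₀ y} ⊆ ⋃ k : ℕ, ball x₀ (A * 2 ^ (k + 1)) \ ball x₀ (A * 2 ^ k) := by
  intro y hy
  obtain ⟨k, hk₁, hk₂⟩ := exists_nat_pow_near ((one_le_div hA).2 (le_of_lt hy)) one_lt_two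
  refine Set.mem_iUnion.2 ⟨k, mem_ball'.2 ?_, fun h => (mem_ball'.1 h).not_ge ?_⟩
  · rwa [div_lt_iff₀ hA, mul_comm] at hk₂
  · rwa [le_div_iff₀ hA, mul_comm] at hk₁

section MaximalFunction

variable {n : ℕ} {w : EuclideanSpace ℝ (Fin n) → ℝ} {x x₀ : EuclideanSpace ℝ (Fin n)}

theorem setLIntegral_ball_le_maximalFn {R : ℝ} (hR : dist x₀ x < R) :
    ∫⁻ y in ball x₀ R, ENNReal.ofReal (w y) ≤
      ENNReal.ofReal (R ^ n * unitBallVolume n) * maximalFn n w x := by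
  have hR0 : 0 < R := dist_nonneg.trans_lt hR
  rw [← volume_ball_eq_ofReal x₀ hR0, mul_comm, ← ENNReal.div_le_iff_le_mul
    (Or.inl (measure_ball_pos _ _ hR0).ne') (Or.inl measure_ball_lt_top.ne)]
  exact le_iSup_of_le x₀ <| le_iSup_of_le R <| le_iSup_of_le hR0 <|
    le_iSup_of_le (mem_ball'.2 hR) le_rfl

theorem setLIntegral_indicator_closedBall_le_maximalFn {R R' : ℝ} (hRR' : R < R')
    (hx : dist x₀ x < R') (s : Set (EuclideanSpace ℝ (Fin n))) :
    ∫⁻ y in s, (closedBall x₀ R).indicator (fun y => ENNReal.ofReal (w y)) y ≤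
      ENNReal.ofReal (R' ^ n * unitBallVolume n) * maximalFn n w x :=
  calc _ ≤ ∫⁻ y, (closedBall x₀ R).indicator (fun y => ENNReal.ofReal (w y)) y :=
        setLIntegral_le_lintegral _ _
    _ ≤ ∫⁻ y in ball x₀ R', ENNReal.ofReal (w y) := by
        rw [lintegral_indicator measurableSet_closedBall]
        exact lintegral_mono_set (closedBall_subset_ball hRR')
    _ ≤ _ := setLIntegral_ball_le_maximalFn hx

theorem setLIntegral_annulus_le_maximalFn {ε A : ℝ} (hε : 0 ≤ ε) (hA : dist x₀ x < A) (k : ℕ) :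
    ∫⁻ y in ball x₀ (A * 2 ^ (k + 1)) \ ball x₀ (A * 2 ^ k),
        ENNReal.ofReal (dist x₀ y ^ (-(n + ε))) * ENNReal.ofReal (w y) ≤
      ENNReal.ofReal (2 ^ n * unitBallVolume n * A ^ (-ε) * ((2 : ℝ) ^ (-ε)) ^ k) *
        maximalFn n w x := by
  have hA0 : 0 < A := dist_nonneg.trans_lt hA
  have hAk : 0 < A * 2 ^ k := by positivity
  calc _ ≤ ∫⁻ y in ball x₀ (A * 2 ^ (k + 1)) \ ball x₀ (A * 2 ^ k),
          ENNReal.ofReal ((A * 2 ^ k) ^ (-(n + ε))) * ENNReal.ofReal (w y) := by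
        refine setLIntegral_mono' (measurableSet_ball.diff measurableSet_ball) fun y hy => ?_
        gcongr ENNReal.ofReal ?_ * _
        exact Real.rpow_le_rpow_of_nonpos hAk (not_lt.1 (mt mem_ball'.2 hy.2))
          (by linarith [n.cast_nonneg (α := ℝ)] : -((n : ℝ) + ε) ≤ 0)
    _ = ENNReal.ofReal ((A * 2 ^ k) ^ (-(n + ε))) *
          ∫⁻ y in ball x₀ (A * 2 ^ (k + 1)) \ ball x₀ (A * 2 ^ k), ENNReal.ofReal (w y) :=
        lintegral_const_mul' _ _ ENNReal.ofReal_ne_top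
    _ ≤ ENNReal.ofReal ((A * 2 ^ k) ^ (-(n + ε))) *
          (ENNReal.ofReal ((A * 2 ^ (k + 1)) ^ n * unitBallVolume n) * maximalFn n w x) := by
        gcongr
        refine (lintegral_mono_set Set.sdiff_subset).trans (setLIntegral_ball_le_maximalFn ?_)
        exact hA.trans_le (le_mul_of_one_le_right hA0.le (one_le_pow₀ one_le_two))
    _ = _ := by
        rw [← mul_assoc, ← ENNReal.ofReal_mul (by positivity), ← mul_assoc,
          rpow_neg_mul_pow_dyadic hA0]
        ring_nf

theorem lintegral_dist_rpow_mul_le_maximalFn {ε A : ℝ} (hε : 0 < ε) (hA : dist x₀ x < A) :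
    ∫⁻ y in {y | A < dist x₀ y},
        ENNReal.ofReal (dist x₀ y ^ (-(n + ε))) * ENNReal.ofReal (w y) ≤
      ENNReal.ofReal (2 ^ n * unitBallVolume n / (1 - 2 ^ (-ε)) * A ^ (-ε)) *
        maximalFn n w x := by
  have hq0 : (0 : ℝ) ≤ 2 ^ (-ε) := by positivity
  have hq1 : (2 : ℝ) ^ (-ε) < 1 := Real.rpow_lt_one_of_one_lt_of_neg one_lt_two (by linarith)
  have hA0 : 0 < A := dist_nonneg.trans_lt hA
  have hc : 0 ≤ 2 ^ n * unitBallVolume n * A ^ (-ε) := by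
    have := unitBallVolume_pos n; positivity
  calc _ ≤ ∫⁻ y in ⋃ k : ℕ, ball x₀ (A * 2 ^ (k + 1)) \ ball x₀ (A * 2 ^ k),
          ENNReal.ofReal (dist x₀ y ^ (-(n + ε))) * ENNReal.ofReal (w y) :=
        lintegral_mono_set (setOf_lt_dist_subset_iUnion_annulus x₀ hA0)
    _ ≤ ∑' k : ℕ, ∫⁻ y in ball x₀ (A * 2 ^ (k + 1)) \ ball x₀ (A * 2 ^ k),
          ENNReal.ofReal (dist x₀ y ^ (-(n + ε))) * ENNReal.ofReal (w y) :=
        lintegral_iUnion_le _ _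
    _ ≤ ∑' k : ℕ, ENNReal.ofReal (2 ^ n * unitBallVolume n * A ^ (-ε) * ((2 : ℝ) ^ (-ε)) ^ k) *
          maximalFn n w x :=
        ENNReal.tsum_le_tsum (setLIntegral_annulus_le_maximalFn hε.le hA)
    _ = _ := by
        rw [ENNReal.tsum_mul_right, ← ENNReal.ofReal_tsum_of_nonneg (fun k => by positivity)
          ((summable_geometric_of_lt_one hq0 hq1).mul_left _), tsum_mul_left,
          tsum_geometric_of_lt_one hq0 hq1]
        ring_nf

end MaximalFunction

theorem ofReal_norm_stronglySingularKernel_sub_mul_le {n : ℕ} {b : ℝ} (hb : 0 ≤ b)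
    (w : EuclideanSpace ℝ (Fin n) → ℝ) {x x₀ y : EuclideanSpace ℝ (Fin n)}
    (hy : 2 * dist x₀ x < dist x₀ y) :
    ENNReal.ofReal
        (‖stronglySingularKernel n b (x - y) - stronglySingularKernel n b (x₀ - y)‖ * w y) ≤
      ENNReal.ofReal ((b + n) * 2 ^ ((n : ℝ) + (b + 1)) * dist x₀ x) *
          (ENNReal.ofReal (dist x₀ y ^ (-(n + (b + 1)))) * ENNReal.ofReal (w y)) +
        ENNReal.ofReal (2 ^ (n + 1)) *
          (closedBall x₀ 2).indicator (fun y => ENNReal.ofReal (w y)) y := by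
  rw [ENNReal.ofReal_mul (norm_nonneg _)]
  calc _ ≤ ENNReal.ofReal ((b + n) * 2 ^ ((n : ℝ) + (b + 1)) * dist x₀ x *
          dist x₀ y ^ (-(n + (b + 1))) +
        (closedBall x₀ 2).indicator (fun _ => (2 : ℝ) ^ (n + 1)) y) * ENNReal.ofReal (w y) := by
        gcongr
        exact norm_stronglySingularKernel_sub_le hb hy
    _ = _ := by
        rw [ENNReal.ofReal_add (by positivity) (Set.indicator_nonneg (fun _ _ => by positivity) y),
          ENNReal.ofReal_mul (by positivity), add_mul, mul_assoc]
        by_cases hy2 : y ∈ closedBall x₀ 2 <;> simp [hy2]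

theorem lintegral_norm_stronglySingularKernel_sub_mul_le {n : ℕ} {b : ℝ} (hb : 0 ≤ b)
    {w : EuclideanSpace ℝ (Fin n) → ℝ} (hw : AEMeasurable w) {x x₀ : EuclideanSpace ℝ (Fin n)}
    {A : ℝ} (hx : dist x₀ x ≤ 1) (hA0 : 0 < A) (hA : 2 * dist x₀ x ≤ A) :
    ∫⁻ y in {y | A < dist x₀ y}, ENNReal.ofReal
        (‖stronglySingularKernel n b (x - y) - stronglySingularKernel n b (x₀ - y)‖ * w y) ≤
      ENNReal.ofReal ((b + n) * 2 ^ ((n : ℝ) + (b + 1)) * dist x₀ x *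
          (2 ^ n * unitBallVolume n / (1 - 2 ^ (-(b + 1))) * A ^ (-(b + 1))) +
        2 ^ (n + 1) * (3 ^ n * unitBallVolume n)) * maximalFn n w x := by
  set c := (b + n) * 2 ^ ((n : ℝ) + (b + 1)) * dist x₀ x
  have hc : 0 ≤ c := by positivity
  have hV := unitBallVolume_pos n
  have hq : 0 < 1 - (2 : ℝ) ^ (-(b + 1)) :=
    sub_pos.2 (Real.rpow_lt_one_of_one_lt_of_neg one_lt_two (by linarith))
  calc _ ≤ ∫⁻ y in {y | A < dist x₀ y}, (ENNReal.ofReal c *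
          (ENNReal.ofReal (dist x₀ y ^ (-(n + (b + 1)))) * ENNReal.ofReal (w y)) +
          ENNReal.ofReal (2 ^ (n + 1)) *
            (closedBall x₀ 2).indicator (fun y => ENNReal.ofReal (w y)) y) :=
        setLIntegral_mono' (measurableSet_lt measurable_const (measurable_const.dist measurable_id))
          fun y hy => ofReal_norm_stronglySingularKernel_sub_mul_le hb w (by linarith [hy.out])
    _ = ENNReal.ofReal c * (∫⁻ y in {y | A < dist x₀ y},
          ENNReal.ofReal (dist x₀ y ^ (-(n + (b + 1)))) * ENNReal.ofReal (w y)) +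
        ENNReal.ofReal (2 ^ (n + 1)) * ∫⁻ y in {y | A < dist x₀ y},
          (closedBall x₀ 2).indicator (fun y => ENNReal.ofReal (w y)) y := by
        rw [lintegral_add_right' _ ((hw.ennreal_ofReal.indicator measurableSet_closedBall).const_mul
          _).restrict, lintegral_const_mul' _ _ ENNReal.ofReal_ne_top,
          lintegral_const_mul' _ _ ENNReal.ofReal_ne_top]
    _ ≤ ENNReal.ofReal c * (ENNReal.ofReal (2 ^ n * unitBallVolume n / (1 - 2 ^ (-(b + 1))) *
          A ^ (-(b + 1))) * maximalFn n w x) +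
        ENNReal.ofReal (2 ^ (n + 1)) *
          (ENNReal.ofReal (3 ^ n * unitBallVolume n) * maximalFn n w x) := by
        gcongr
        · exact lintegral_dist_rpow_mul_le_maximalFn (by linarith) (by linarith)
        · exact setLIntegral_indicator_closedBall_le_maximalFn (by norm_num) (by linarith) _
    _ = _ := by
        rw [ENNReal.ofReal_add (by positivity) (by positivity), ENNReal.ofReal_mul hc,
          ENNReal.ofReal_mul (by positivity : (0 : ℝ) ≤ 2 ^ (n + 1)), add_mul]
        ring

/-- **Weighted Hörmander-type estimate (Lemma).**
For `b > 0` there is `C > 0`, depending only on `n` and `b`, such that for every weight `w`,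
every `x₀` and almost every `x ≠ x₀` with `|x₀ - x| ≤ 1`,
`∫_{|x₀-y| > 2|x₀-x|^{1/(1+b)}} |K_b(x-y) - K_b(x₀-y)| w(y) dy ≤ C Mw(x)`. -/
theorem weighted_hormander (n : ℕ) (b : ℝ) (hb : 0 < b) :
    ∃ C : ℝ, 0 < C ∧
      ∀ w : EuclideanSpace ℝ (Fin n) → ℝ, LocallyIntegrable w volume → (∀ x, 0 ≤ w x) →
        ∀ x₀ : EuclideanSpace ℝ (Fin n),
          ∀ᵐ x ∂(volume : Measure (EuclideanSpace ℝ (Fin n))), x ≠ x₀ → dist x₀ x ≤ 1 →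
            (∫⁻ y in {y | 2 * dist x₀ x ^ (1 / (1 + b)) < dist x₀ y},
                ENNReal.ofReal
                  (‖stronglySingularKernel n b (x - y) - stronglySingularKernel n b (x₀ - y)‖ *
                    w y)) ≤
              ENNReal.ofReal C * maximalFn n w x := by
  have hV := unitBallVolume_pos n
  have hq : 0 < 1 - (2 : ℝ) ^ (-(b + 1)) :=
    sub_pos.2 (Real.rpow_lt_one_of_one_lt_of_neg one_lt_two (by linarith))
  refine ⟨(b + n) * 2 ^ ((n : ℝ) + (b + 1)) *
      (2 ^ n * unitBallVolume n / (1 - 2 ^ (-(b + 1))) * 2 ^ (-(b + 1))) +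
      2 ^ (n + 1) * (3 ^ n * unitBallVolume n), by positivity,
    fun w hw _ x₀ => Eventually.of_forall fun x hx hx1 => ?_⟩
  have hd : 0 < dist x₀ x := dist_pos.2 hx.symm
  have hdA : dist x₀ x ≤ dist x₀ x ^ (1 / (1 + b)) := by
    simpa using Real.rpow_le_rpow_of_exponent_ge hd hx1
      ((div_le_one (by linarith)).2 (by linarith) : 1 / (1 + b) ≤ 1)
  have hscale : dist x₀ x * (2 * dist x₀ x ^ (1 / (1 + b))) ^ (-(b + 1)) = 2 ^ (-(b + 1)) := by
    rw [Real.mul_rpow zero_le_two (by positivity), ← Real.rpow_mul hd.le,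
      show 1 / (1 + b) * -(b + 1) = -1 by field_simp; ring, Real.rpow_neg_one]
    field_simp
  refine (lintegral_norm_stronglySingularKernel_sub_mul_le hb.le
    hw.aestronglyMeasurable.aemeasurable hx1 (by positivity) (by linarith)).trans_eq ?_
  congr 2
  linear_combination ((b + n) * 2 ^ ((n : ℝ) + (b + 1)) *
    (2 ^ n * unitBallVolume n / (1 - 2 ^ (-(b + 1))))) * hscale
end

section
/- Let $b>0$ and $n \ge 1$. There exists a constant $C>0$ (depending only on $n$ and $b$) such that for all $x, x_0, y \in \mathbb{R}^n$ satisfying $|x_0 - x| \le 1$, $|x_0 - y| > 2|x_0-x|^{1/(1+b)}$, $0 < |x-y| \le 1$, and $0 < |x_0 - y| \le 1$, one has $\left| \frac{e^{i|x-y|^{-b}}}{|x-y|^{n}} - \frac{e^{i|x_0-y|^{-b}}}{|x_0-y|^{n}} \right| \le C\, \frac{|x_0 - x|}{|x_0 - y|^{n+1+b}}$. -/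
open MeasureTheory Metric Filter
open scoped ENNReal NNReal

/-- **Mean value estimate for the kernel difference (Case 3 of the Lemma).**
For `b > 0` and `n ≥ 1` there is `C > 0`, depending only on `n` and `b`, such that whenever
`|x₀ - x| ≤ 1`, `|x₀ - y| > 2|x₀-x|^{1/(1+b)}`, `0 < |x-y| ≤ 1` and `0 < |x₀-y| ≤ 1`, one has
`|e^{i|x-y|^{-b}}/|x-y|^n - e^{i|x₀-y|^{-b}}/|x₀-y|^n| ≤ C |x₀-x| / |x₀-y|^{n+1+b}`. -/
theorem kernel_difference_estimate (n : ℕ) (hn : 1 ≤ n) (b : ℝ) (hb : 0 < b) :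
    ∃ C : ℝ, 0 < C ∧
      ∀ x x₀ y : EuclideanSpace ℝ (Fin n),
        dist x₀ x ≤ 1 →
        2 * dist x₀ x ^ (1 / (1 + b)) < dist x₀ y →
        0 < dist x y → dist x y ≤ 1 →
        0 < dist x₀ y → dist x₀ y ≤ 1 →
        ‖Complex.exp (Complex.I * ((dist x y ^ (-b) : ℝ) : ℂ)) / ((dist x y : ℂ) ^ (n : ℕ)) -
            Complex.exp (Complex.I * ((dist x₀ y ^ (-b) : ℝ) : ℂ)) /
              ((dist x₀ y : ℂ) ^ (n : ℕ))‖ ≤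
          C * (dist x₀ x / dist x₀ y ^ ((n : ℝ) + 1 + b)) := by
  refine ⟨((n : ℝ) + b) * 2 ^ ((n : ℝ) + 1 + b), by positivity, ?_⟩
  intro x x₀ y hd1 h2 hr0 hr1 hs0 hs1
  set r : ℝ := dist x y with hr
  set s : ℝ := dist x₀ y with hs
  set d : ℝ := dist x₀ x with hd
  have hd0 : 0 ≤ d := dist_nonneg
  have hb1 : 0 < 1 + b := by linarith
  -- d < (s/2)^(1+b)
  have hA : d ≤ (s / 2) ^ (1 + b) := by
    have h3 : d ^ (1 / (1 + b)) < s / 2 := by linarith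
    have := Real.rpow_le_rpow (Real.rpow_nonneg hd0 _) h3.le hb1.le
    rwa [← Real.rpow_mul hd0, one_div, inv_mul_cancel₀ hb1.ne', Real.rpow_one] at this
  -- (s/2)^(1+b) ≤ s/2
  have hs2 : (0:ℝ) < s / 2 := by linarith
  have hB : d ≤ s / 2 := by
    refine hA.trans ?_
    calc (s / 2) ^ (1 + b) ≤ (s / 2) ^ (1:ℝ) :=
          Real.rpow_le_rpow_of_exponent_ge hs2 (by linarith) (by linarith)
      _ = s / 2 := Real.rpow_one _
  -- s/2 ≤ r
  have hC : s / 2 ≤ r := by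
    have htri : s ≤ d + r := dist_triangle x₀ x y
    linarith
  -- MVT setup
  set K : Set ℝ := Set.Icc (s / 2) 1 with hK
  have hrK : r ∈ K := ⟨hC, hr1⟩
  have hsK : s ∈ K := ⟨by linarith, hs1⟩
  set F : ℝ → ℂ := fun t => Complex.exp (Complex.I * ((t ^ (-b) : ℝ) : ℂ)) / ((t:ℂ) ^ n)
    with hF
  set F' : ℝ → ℂ := fun t =>
    Complex.exp (Complex.I * ((t ^ (-b) : ℝ) : ℂ)) * (Complex.I * ((-b * t ^ (-b - 1) : ℝ) : ℂ))
        * ((t:ℂ) ^ n)⁻¹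
      + Complex.exp (Complex.I * ((t ^ (-b) : ℝ) : ℂ)) *
          (-((((t:ℂ)) ^ n) ^ 2)⁻¹ * ((n:ℂ) * (t:ℂ) ^ (n - 1))) with hF'
  set M : ℝ := ((n : ℝ) + b) * (s / 2) ^ (-((n:ℝ) + 1 + b)) with hM
  have hderiv : ∀ t ∈ K, HasDerivWithinAt F (F' t) K t := by
    intro t htK
    have ht0 : 0 < t := lt_of_lt_of_le hs2 htK.1
    have htne : (t:ℂ) ≠ 0 := by exact_mod_cast ht0.ne'
    have htpow : ((t:ℂ) ^ n) ≠ 0 := pow_ne_zero _ htne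
    have h1 : HasDerivAt (fun t : ℝ => Complex.exp (Complex.I * ((t ^ (-b) : ℝ) : ℂ)))
        (Complex.exp (Complex.I * ((t ^ (-b) : ℝ) : ℂ))
          * (Complex.I * ((-b * t ^ (-b - 1) : ℝ) : ℂ))) t := by
      have hin : HasDerivAt (fun t : ℝ => ((t ^ (-b) : ℝ) : ℂ))
          ((( -b * t ^ (-b - 1) : ℝ)) : ℂ) t := by
        have := (Real.hasDerivAt_rpow_const (p := -b) (Or.inl ht0.ne')).ofReal_comp
        simpa using this
      exact (hin.const_mul Complex.I).cexp
    have h2 : HasDerivAt (fun t : ℝ => ((t:ℂ) ^ n)⁻¹)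
        (-((((t:ℂ)) ^ n) ^ 2)⁻¹ * ((n:ℂ) * (t:ℂ) ^ (n - 1))) t := by
      have hp : HasDerivAt (fun z : ℂ => (z ^ n)⁻¹)
          (-((((t:ℂ)) ^ n) ^ 2)⁻¹ * ((n:ℂ) * (t:ℂ) ^ (n - 1))) ((t:ℝ):ℂ) :=
        (hasDerivAt_inv htpow).comp ((t:ℝ):ℂ) (hasDerivAt_pow n ((t:ℝ):ℂ))
      exact hp.comp_ofReal
    have := h1.mul h2
    have hFeq : F = fun t : ℝ =>
        Complex.exp (Complex.I * ((t ^ (-b) : ℝ) : ℂ)) * ((t:ℂ) ^ n)⁻¹ := by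
      funext u; simp [hF, div_eq_mul_inv]
    rw [hFeq]
    exact this.hasDerivWithinAt
  have hbound : ∀ t ∈ K, ‖F' t‖ ≤ M := by
    intro t htK
    have ht0 : 0 < t := lt_of_lt_of_le hs2 htK.1
    have ht1 : t ≤ 1 := htK.2
    have hnorm_exp : ∀ c : ℝ, ‖Complex.exp (Complex.I * (c:ℂ))‖ = 1 := by
      intro c
      rw [mul_comm, Complex.norm_exp_ofReal_mul_I]
    have htpow_norm : ‖((t:ℂ) ^ n)‖ = t ^ n := by
      rw [norm_pow, Complex.norm_real, Real.norm_of_nonneg ht0.le]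
    have h1 : ‖F' t‖ ≤ b * t ^ (-b - 1) * (t ^ n)⁻¹ + n * t ^ (n - 1) / (t ^ n) ^ 2 := by
      have e1 : ‖Complex.exp (Complex.I * ((t ^ (-b) : ℝ) : ℂ))
          * (Complex.I * ((-b * t ^ (-b - 1) : ℝ) : ℂ)) * ((t:ℂ) ^ n)⁻¹‖
          = b * t ^ (-b - 1) * (t ^ n)⁻¹ := by
        rw [norm_mul, norm_mul, norm_mul, hnorm_exp, Complex.norm_I, norm_inv, htpow_norm,
          Complex.norm_real]
        rw [Real.norm_of_nonpos (by nlinarith [Real.rpow_pos_of_pos ht0 (-b - 1)])]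
        ring
      have e2 : ‖Complex.exp (Complex.I * ((t ^ (-b) : ℝ) : ℂ)) *
          (-((((t:ℂ)) ^ n) ^ 2)⁻¹ * ((n:ℂ) * (t:ℂ) ^ (n - 1)))‖
          = n * t ^ (n - 1) / (t ^ n) ^ 2 := by
        simp only [norm_mul, norm_inv, norm_neg, norm_pow, Complex.norm_natCast,
          Complex.norm_real, Real.norm_of_nonneg ht0.le, hnorm_exp, one_mul]
        ring
      calc ‖F' t‖ ≤ _ + _ := norm_add_le _ _
        _ = _ := by rw [e1, e2]
    refine h1.trans ?_
    have key : ∀ z : ℝ, -((n:ℝ) + 1 + b) ≤ z → z ≤ 0 → t ^ z ≤ (s / 2) ^ (-((n:ℝ) + 1 + b)) := by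
      intro z hz1 hz0
      calc t ^ z ≤ t ^ (-((n:ℝ) + 1 + b)) :=
            Real.rpow_le_rpow_of_exponent_ge ht0 ht1 hz1
        _ ≤ (s / 2) ^ (-((n:ℝ) + 1 + b)) :=
            Real.rpow_le_rpow_of_nonpos hs2 htK.1
              (by linarith [Nat.cast_nonneg (α := ℝ) n])
    have t1 : t ^ (-b - 1) * (t ^ n)⁻¹ = t ^ (-b - 1 - n) := by
      rw [← Real.rpow_natCast t n, ← Real.rpow_neg ht0.le, ← Real.rpow_add ht0]
      ring_nf
    have t2 : t ^ (n - 1) / (t ^ n) ^ 2 = t ^ (-(n:ℝ) - 1) := by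
      rw [← pow_mul, ← Real.rpow_natCast t (n-1), ← Real.rpow_natCast t (n*2),
        ← Real.rpow_sub ht0]
      congr 1
      have : ((n - 1 : ℕ) : ℝ) = (n : ℝ) - 1 := by
        have : (1:ℕ) ≤ n := hn
        push_cast [Nat.cast_sub this]
        ring
      rw [this]; push_cast; ring
    rw [mul_assoc, t1, mul_div_assoc, t2]
    have b1 : t ^ (-b - 1 - n) ≤ (s / 2) ^ (-((n:ℝ) + 1 + b)) :=
      key _ (by linarith) (by linarith [Nat.cast_nonneg (α := ℝ) n])
    have b2 : t ^ (-(n:ℝ) - 1) ≤ (s / 2) ^ (-((n:ℝ) + 1 + b)) :=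
      key _ (by linarith [Nat.cast_nonneg (α := ℝ) n]) (by linarith [Nat.cast_nonneg (α := ℝ) n])
    have hn0 : (0:ℝ) ≤ n := Nat.cast_nonneg n
    rw [hM]
    nlinarith [Real.rpow_pos_of_pos hs2 (-((n:ℝ) + 1 + b))]
  have hmvt := (convex_Icc (s/2) 1).norm_image_sub_le_of_norm_hasDerivWithin_le
    hderiv hbound hsK hrK
  -- ‖F r - F s‖ ≤ M * ‖r - s‖
  have hrs : ‖r - s‖ ≤ d := by
    rw [Real.norm_eq_abs, hr, hs, hd]
    have := abs_dist_sub_le x x₀ y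
    rwa [dist_comm x x₀] at this
  have hM0 : 0 ≤ M := by
    have := Real.rpow_pos_of_pos hs2 (-((n:ℝ) + 1 + b))
    have hn0 : (0:ℝ) ≤ n := Nat.cast_nonneg n
    rw [hM]; positivity
  have final : ‖F r - F s‖ ≤ M * d := hmvt.trans (by exact mul_le_mul_of_nonneg_left hrs hM0)
  have hMd : M * d = ((n : ℝ) + b) * 2 ^ ((n : ℝ) + 1 + b) * (d / s ^ ((n:ℝ) + 1 + b)) := by
    rw [hM, Real.rpow_neg hs2.le, Real.div_rpow hs0.le (by norm_num : (0:ℝ) ≤ 2)]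
    have h2p : (0:ℝ) < 2 ^ ((n:ℝ) + 1 + b) := Real.rpow_pos_of_pos two_pos _
    have hsp : (0:ℝ) < s ^ ((n:ℝ) + 1 + b) := Real.rpow_pos_of_pos hs0 _
    field_simp
  rw [← hMd]
  simpa [hF] using final
end
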